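/- If A ∈ M_n(ℂ) is normal with eigenvalues λ_1, …, λ_n, then the Davis-Wielandt shell DW(A) equals the convex hull of the points (Re λ_j, Im λ_j, |λ_j|²) ∈ ℝ³, j = 1,…,n. -/

import Mathlib

open Matrix

noncomputable def DW {n : ℕ} (A : Matrix (Fin n) (Fin n) ℂ) : Set (ℝ × ℝ × ℝ) :=
  {v | ∃ x : EuclideanSpace ℂ (Fin n), ‖x‖ = 1 ∧
    v = ((inner ℂ x (Matrix.toEuclideanLin A x) : ℂ).re,
         (inner ℂ x (Matrix.toEuclideanLin A x) : ℂ).im,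
         ‖Matrix.toEuclideanLin A x‖ ^ 2)}

/-!
Unitary conjugation maps the unit sphere onto itself and preserves both `x* A x` and `‖A x‖`,
so it suffices to treat `A = diag(λ)`. For a unit vector `x` the shell point of `diag(λ)` is the
convex combination `∑ |xᵢ|² (Re λᵢ, Im λᵢ, |λᵢ|²)`, and as `x` runs over the unit sphere the
weights `(|xᵢ|²)ᵢ` run over the whole standard simplex.
-/

open Set

theorem convexHull_range_eq_image_stdSimplex {ι E : Type*} [Fintype ι] [AddCommGroup E]
    [Module ℝ E] (f : ι → E) :
    convexHull ℝ (range f) = Fintype.linearCombination ℝ f '' stdSimplex ℝ ι := by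
  classical
  rw [← convexHull_rangle_single_eq_stdSimplex, LinearMap.image_convexHull, ← range_comp]
  congr 2
  ext i
  simp [Fintype.linearCombination_apply, Pi.single_apply]

theorem EuclideanSpace.image_sphere_normSq_eq_stdSimplex {𝕜 ι : Type*} [RCLike 𝕜] [Fintype ι] :
    (fun (x : EuclideanSpace 𝕜 ι) i ↦ ‖x i‖ ^ 2) '' Metric.sphere 0 1 = stdSimplex ℝ ι := by
  ext w
  constructor
  · rintro ⟨x, hx, rfl⟩
    refine ⟨fun i ↦ by positivity, ?_⟩
    rw [← EuclideanSpace.norm_sq_eq, mem_sphere_zero_iff_norm.mp hx, one_pow]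
  · rintro ⟨hw0, hw1⟩
    refine ⟨WithLp.toLp 2 fun i ↦ (√(w i) : 𝕜), ?_, ?_⟩
    · have : ‖WithLp.toLp 2 fun i ↦ (√(w i) : 𝕜)‖ ^ 2 = 1 := by
        simp [EuclideanSpace.norm_sq_eq, Real.sq_sqrt (hw0 _), hw1]
      rwa [mem_sphere_zero_iff_norm, ← pow_eq_one_iff_of_nonneg (norm_nonneg _) two_ne_zero]
    · ext i
      simp [Real.sq_sqrt (hw0 i)]

noncomputable def dwVertex (z : ℂ) : ℝ × ℝ × ℝ := (z.re, z.im, ‖z‖ ^ 2)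

section dwPoint

variable {ι : Type*} [Fintype ι] [DecidableEq ι]

noncomputable def dwPoint (A : Matrix ι ι ℂ) (x : EuclideanSpace ℂ ι) : ℝ × ℝ × ℝ :=
  ((inner ℂ x (toEuclideanLin A x)).re, (inner ℂ x (toEuclideanLin A x)).im,
    ‖toEuclideanLin A x‖ ^ 2)

theorem dwPoint_unitary_conj {U : Matrix ι ι ℂ} (hU : U ∈ unitaryGroup ι ℂ) (B : Matrix ι ι ℂ)
    (x : EuclideanSpace ℂ ι) :
    dwPoint (U * B * Uᴴ) (toEuclideanLin U x) = dwPoint B x := by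
  have hUU : Uᴴ * U = 1 := hU.1
  have hUBU : toEuclideanLin (U * B * Uᴴ) (toEuclideanLin U x) =
      toEuclideanLin U (toEuclideanLin B x) := by
    simp [toLpLin_apply, mulVec_mulVec, mul_assoc, hUU]
  have hU' : toEuclideanCLM (𝕜 := ℂ) U ∈ unitary _ := Unitary.map_mem toEuclideanCLM hU
  have hinner (y z : EuclideanSpace ℂ ι) :
      inner ℂ (toEuclideanLin U y) (toEuclideanLin U z) = inner ℂ y z :=
    ContinuousLinearMap.inner_map_map_of_mem_unitary hU' y z
  have hnorm (y : EuclideanSpace ℂ ι) : ‖toEuclideanLin U y‖ = ‖y‖ :=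
    ContinuousLinearMap.norm_map_of_mem_unitary hU' y
  simp only [dwPoint, hUBU, hinner, hnorm]

theorem dwPoint_diagonal (lam : ι → ℂ) (x : EuclideanSpace ℂ ι) :
    dwPoint (diagonal lam) x =
      Fintype.linearCombination ℝ (dwVertex ∘ lam) (fun i ↦ ‖x i‖ ^ 2) := by
  have hdiag (i : ι) : toEuclideanLin (diagonal lam) x i = lam i * x i := by
    simp [toLpLin_apply, mulVec_diagonal]
  have hinner :
      inner ℂ x (toEuclideanLin (diagonal lam) x) = ∑ i, ((‖x i‖ ^ 2 : ℝ) : ℂ) * lam i := by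
    simp only [PiLp.inner_apply, hdiag, RCLike.inner_apply', Complex.ofReal_pow,
      ← Complex.mul_conj']
    exact Finset.sum_congr rfl fun i _ ↦ by ring
  have hnorm : ‖toEuclideanLin (diagonal lam) x‖ ^ 2 = ∑ i, ‖x i‖ ^ 2 * ‖lam i‖ ^ 2 := by
    simp only [EuclideanSpace.norm_sq_eq, hdiag, norm_mul, mul_pow, mul_comm]
  simp only [dwPoint, hinner, hnorm, Fintype.linearCombination_apply, Function.comp_apply,
    dwVertex]
  ext <;> simp only [Prod.fst_sum, Prod.snd_sum, Prod.smul_fst, Prod.smul_snd, smul_eq_mul,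
    Complex.re_sum, Complex.im_sum, Complex.re_ofReal_mul, Complex.im_ofReal_mul]

end dwPoint

theorem DW_eq_image_sphere {n : ℕ} (A : Matrix (Fin n) (Fin n) ℂ) :
    DW A = dwPoint A '' Metric.sphere 0 1 := by
  ext v
  simp [DW, dwPoint, eq_comm]

theorem DW_unitary_conj {n : ℕ} {U : Matrix (Fin n) (Fin n) ℂ} (hU : U ∈ unitaryGroup (Fin n) ℂ)
    (B : Matrix (Fin n) (Fin n) ℂ) : DW (U * B * Uᴴ) = DW B := by
  let e : EuclideanSpace ℂ (Fin n) ≃ₗᵢ[ℂ] EuclideanSpace ℂ (Fin n) :=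
    Unitary.linearIsometryEquiv ⟨toEuclideanCLM (𝕜 := ℂ) U, Unitary.map_mem _ hU⟩
  have he (x) : e x = toEuclideanLin U x := rfl
  have he_sphere : e '' Metric.sphere 0 1 = Metric.sphere 0 1 := by
    rw [e.image_sphere, map_zero]
  rw [DW_eq_image_sphere, ← he_sphere, image_image, DW_eq_image_sphere]
  simp only [he, dwPoint_unitary_conj hU]

theorem DW_diagonal {n : ℕ} (lam : Fin n → ℂ) :
    DW (diagonal lam) = convexHull ℝ (range (dwVertex ∘ lam)) := by
  rw [DW_eq_image_sphere, convexHull_range_eq_image_stdSimplex,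
    ← EuclideanSpace.image_sphere_normSq_eq_stdSimplex (𝕜 := ℂ), image_image]
  simp only [dwPoint_diagonal]

theorem stmt7 {n : ℕ} (A U : Matrix (Fin n) (Fin n) ℂ) (lam : Fin n → ℂ)
    (hU : U ∈ Matrix.unitaryGroup (Fin n) ℂ)
    (hA : A = U * Matrix.diagonal lam * Uᴴ) :
    DW A = convexHull ℝ
      {p : ℝ × ℝ × ℝ | ∃ j : Fin n,
        p = ((lam j).re, (lam j).im, ‖lam j‖ ^ 2)} := by
  rw [hA, DW_unitary_conj hU, DW_diagonal]
  congr 1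
  ext p
  simp [dwVertex, eq_comm]
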